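/- The Herbrand assembly N = (ℕ, ℕ, ν), where ν(n) = ↑_{!ℕ} {⟨n⟩}, together with the morphisms 0 : 1 → N (picking out 0) and s : N → N (the successor function), is a natural numbers object in the category HAsm: for every Herbrand assembly A and morphisms a : 1 → A and g : A → A there is a unique morphism h : N → A with h ∘ 0 = a and h ∘ s = g ∘ h. -/

import Mathlib

/-!
The mediating map is forced to be `n ↦ gⁿ(a *)`; the content is that it is tracked. If `ra` and
`rg` track `a` and `g`, then `w₀ = ra · ⟨⟩`, `wₖ₊₁ = rg · wₖ` are defined realizers of `gᵏ(a *)`,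
so `k ↦ wₖ` is a total partial recursive function. Since a realizer of `n` in `N` is any list
containing `n`, the map sending `⟨n₁, …, nⱼ⟩` to the concatenation of `w_{n₁}, …, w_{nⱼ}` tracks
`n ↦ gⁿ(a *)`: the concatenation extends `w_{nᵢ}`, and realizer sets are upward closed.
-/

open CategoryTheory Encodable Denumerable

namespace Herbrand

/-- Kleene application in Kleene's first pca `K₁`: `e · n`. -/
def kap (e n : ℕ) : Part ℕ := Nat.Partrec.Code.eval (ofNat Nat.Partrec.Code e) n

/-- `kapIn r n S` : `r · n` is defined and its value lies in `S`. -/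
def kapIn (r n : ℕ) (S : Set ℕ) : Prop := ∃ v ∈ kap r n, v ∈ S

/-- The list coded by a natural number (canonical bijection `ℕ ≃ List ℕ`). -/
def toL (n : ℕ) : List ℕ := ofNat (List ℕ) n

/-- The code of a list of natural numbers. -/
def ofL (l : List ℕ) : ℕ := encode l

@[simp] lemma toL_ofL (l : List ℕ) : toL (ofL l) = l := ofNat_encode l

/-- `!A` : the set of codes of lists all of whose entries lie in `A`. -/
def bang (A : Set ℕ) : Set ℕ := {n | ∀ x ∈ toL n, x ∈ A}

/-- `m ⪯ n` : every entry of the list coded by `m` is an entry of the list coded by `n`. -/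
def sle (m n : ℕ) : Prop := ∀ x ∈ toL m, x ∈ toL n

lemma sle_refl (m : ℕ) : sle m m := fun _ hx => hx

lemma sle_trans {m n k : ℕ} (h1 : sle m n) (h2 : sle n k) : sle m k :=
  fun x hx => h2 x (h1 x hx)

/-- `S` is upward closed in `!A`. -/
def UpwardClosedIn (A S : Set ℕ) : Prop :=
  ∀ m ∈ S, ∀ n ∈ bang A, sle m n → n ∈ S

/-- `↑_{!A} S` : the set of `n ∈ !A` with `m ⪯ n` for some `m ∈ S`. -/
def upClo (A S : Set ℕ) : Set ℕ := {n | n ∈ bang A ∧ ∃ m ∈ S, sle m n}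

lemma mem_bang_univ (n : ℕ) : n ∈ bang Set.univ := fun x _ => Set.mem_univ x

/-- From a partial recursive function we get a `K₁`-code for it. -/
theorem exists_kap_eq {f : ℕ →. ℕ} (hf : Nat.Partrec f) : ∃ e, ∀ n, kap e n = f n := by
  obtain ⟨c, hc⟩ := Nat.Partrec.Code.exists_code.mp hf
  exact ⟨encode c, fun n => by simp [kap, hc]⟩


/-- A Herbrand assembly over `K₁`. -/
structure HAsmObj where
  carrier : Type
  real : Set ℕ
  rz : carrier → Set ℕ
  rz_sub : ∀ a, rz a ⊆ bang real
  rz_ne : ∀ a, (rz a).Nonempty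
  rz_up : ∀ a, UpwardClosedIn real (rz a)

/-- `r ∈ ℕ` tracks the function `f` between the underlying sets of two Herbrand assemblies. -/
def Tracks (B A : HAsmObj) (f : B.carrier → A.carrier) (r : ℕ) : Prop :=
  (∀ m ∈ bang B.real, kapIn r m (bang A.real)) ∧
  ∀ b : B.carrier, ∀ m ∈ B.rz b, kapIn r m (A.rz (f b))

/-- A morphism of Herbrand assemblies: a tracked function. -/
structure HHom (B A : HAsmObj) where
  toFun : B.carrier → A.carrier
  tracked : ∃ r, Tracks B A toFun r

theorem HHom.ext' {B A : HAsmObj} {f g : HHom B A} (h : f.toFun = g.toFun) : f = g := by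
  cases f; cases g; simpa using h

theorem tracks_id_fun (B A : HAsmObj) (f : B.carrier → A.carrier)
    (h1 : ∀ m ∈ bang B.real, m ∈ bang A.real)
    (h2 : ∀ b : B.carrier, ∀ m ∈ B.rz b, m ∈ A.rz (f b)) : ∃ r, Tracks B A f r := by
  obtain ⟨e, he⟩ := exists_kap_eq (Nat.Partrec.of_primrec Nat.Primrec.id)
  exact ⟨e, fun m hm => ⟨m, by simp [he], h1 m hm⟩,
    fun b m hm => ⟨m, by simp [he], h2 b m hm⟩⟩

theorem tracked_id (A : HAsmObj) : ∃ r, Tracks A A id r :=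
  tracks_id_fun A A id (fun _ h => h) (fun _ _ h => h)

theorem tracked_comp {C B A : HAsmObj} {f : C.carrier → B.carrier} {g : B.carrier → A.carrier}
    (hf : ∃ r, Tracks C B f r) (hg : ∃ s, Tracks B A g s) : ∃ t, Tracks C A (g ∘ f) t := by
  obtain ⟨r, hr1, hr2⟩ := hf
  obtain ⟨s, hs1, hs2⟩ := hg
  refine ⟨encode (Nat.Partrec.Code.comp (ofNat Nat.Partrec.Code s) (ofNat Nat.Partrec.Code r)),
    ?_, ?_⟩
  · intro m hm
    obtain ⟨v, hv, hv'⟩ := hr1 m hm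
    obtain ⟨w, hw, hw'⟩ := hs1 v hv'
    exact ⟨w, by simp only [kap, Nat.Partrec.Code.eval, ofNat_encode]; exact Part.mem_bind_iff.mpr ⟨v, hv, hw⟩, hw'⟩
  · intro c m hm
    obtain ⟨v, hv, hv'⟩ := hr2 c m hm
    obtain ⟨w, hw, hw'⟩ := hs2 (f c) v hv'
    exact ⟨w, by simp only [kap, Nat.Partrec.Code.eval, ofNat_encode]; exact Part.mem_bind_iff.mpr ⟨v, hv, hw⟩, hw'⟩

/-- The category `HAsm` of Herbrand assemblies over `K₁`. -/
instance : Category HAsmObj where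
  Hom B A := HHom B A
  id A := ⟨id, tracked_id A⟩
  comp f g := ⟨g.toFun ∘ f.toFun, tracked_comp f.tracked g.tracked⟩
  id_comp f := HHom.ext' rfl
  comp_id f := HHom.ext' rfl
  assoc f g h := HHom.ext' rfl


/-- The Herbrand assembly `∇X = (X, ℕ, x ↦ !ℕ)`. -/
def nablaObj (X : Type) : HAsmObj where
  carrier := X
  real := Set.univ
  rz _ := bang Set.univ
  rz_sub _ := fun _ h => h
  rz_ne _ := ⟨0, mem_bang_univ 0⟩
  rz_up _ := fun _ _ n hn _ => hn

/-- The functor `∇ : Set → HAsm`. -/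
def Nabla : Type ⥤ HAsmObj where
  obj := nablaObj
  map f := ⟨f, tracks_id_fun _ _ f (fun _ h => h) (fun _ _ h => h)⟩
  map_id _ := HHom.ext' rfl
  map_comp _ _ := HHom.ext' rfl

/-- The underlying-set functor `Γ : HAsm → Set`. -/
def Gamma : HAsmObj ⥤ Type where
  obj A := A.carrier
  map f := TypeCat.ofHom f.toFun

/-- The realizability structure of the natural numbers object: `ν n = ↑_{!ℕ} {⟨n⟩}`. -/
def nuN (n : ℕ) : Set ℕ := upClo Set.univ {ofL [n]}

/-- The natural numbers object `N = (ℕ, ℕ, ν)` of `HAsm`. -/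
def NObj : HAsmObj where
  carrier := ℕ
  real := Set.univ
  rz := nuN
  rz_sub _ := fun _ hm => hm.1
  rz_ne n := ⟨ofL [n], mem_bang_univ _, ofL [n], rfl, sle_refl _⟩
  rz_up _ := fun m hm k hk hmk => ⟨hk, hm.2.choose, hm.2.choose_spec.1,
    sle_trans hm.2.choose_spec.2 hmk⟩

/-- The terminal object `1 = ({*}, ℕ, * ↦ !ℕ)` of `HAsm`. -/
def oneObj : HAsmObj := nablaObj PUnit

/-- The zero morphism `0 : 1 ⟶ N`. -/
def zeroH : oneObj ⟶ NObj := by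
  refine ⟨fun _ => (0 : ℕ), ?_⟩
  obtain ⟨e, he⟩ := exists_kap_eq (Nat.Partrec.of_primrec (Nat.Primrec.const (ofL [0])))
  exact ⟨e, fun m _ => ⟨ofL [0], by simp [he], mem_bang_univ _⟩,
    fun b m _ => ⟨ofL [0], by simp [he], mem_bang_univ _, ofL [0], rfl, sle_refl _⟩⟩

/-- The successor morphism `s : N ⟶ N`. -/
def succH : NObj ⟶ NObj := by
  refine ⟨(Nat.succ : ℕ → ℕ), ?_⟩
  have hp : Primrec (fun m : ℕ => ofL ((toL m).map Nat.succ)) :=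
    Primrec.encode.comp ((Primrec.ofNat (List ℕ)).list_map
      ((Primrec.succ.comp Primrec.snd).to₂))
  obtain ⟨e, he⟩ := exists_kap_eq (Nat.Partrec.of_primrec (Primrec.nat_iff.mp hp))
  refine ⟨e, fun m _ => ⟨ofL ((toL m).map Nat.succ), by simp [he], mem_bang_univ _⟩, ?_⟩
  rintro (n : ℕ) m hm
  refine ⟨ofL ((toL m).map Nat.succ), by simp [he], mem_bang_univ _, ofL [n + 1], rfl, ?_⟩
  intro x hx
  have hn : n ∈ toL m := hm.2.choose_spec.2 n (by
    have : hm.2.choose = ofL [n] := hm.2.choose_spec.1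
    rw [this]; simp)
  have hx' : x = n + 1 := by simpa using hx
  subst hx'
  simp only [toL_ofL, List.mem_map]
  exact ⟨n, hn, rfl⟩

end Herbrand

namespace Computable

variable {α β σ : Type*} [Primcodable α] [Primcodable β] [Primcodable σ]

theorem list_map {f : α → List β} {g : α → β → σ} (hf : Computable f) (hg : Computable₂ g) :
    Computable fun a => (f a).map (g a) := by
  have step : Computable₂ fun a (p : ℕ × List σ) => p.2 ++ ((f a)[p.1]?.map (g a)).toList :=
    Computable.list_append.comp (Computable.snd.comp Computable.snd)
      (Primrec.optionToList.to_comp.comp (Computable.option_map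
        (Computable.list_getElem?.comp (hf.comp Computable.fst)
          (Computable.fst.comp Computable.snd))
        (hg.comp (Computable.fst.comp Computable.fst) Computable.snd).to₂))
  refine (Computable.nat_rec (Computable.list_length.comp hf) (Computable.const []) step).of_eq
    fun a => ?_
  suffices h : ∀ i, Nat.rec (motive := fun _ => List σ) []
      (fun y acc => acc ++ ((f a)[y]?.map (g a)).toList) i = ((f a).take i).map (g a) by
    rw [h, List.take_length]
  intro i
  induction i with
  | zero => rfl
  | succ i ih =>
    change _ ++ _ = _
    rw [ih, List.take_add_one, List.map_append, Option.toList_map]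

theorem list_flatMap {f : α → List β} {g : α → β → List σ} (hf : Computable f)
    (hg : Computable₂ g) : Computable fun a => (f a).flatMap (g a) :=
  Primrec.list_flatten.to_comp.comp (hf.list_map hg)

end Computable

namespace Herbrand

lemma kap_partrec (r : ℕ) : Partrec (kap r) :=
  Nat.Partrec.Code.eval_part.comp (Computable.const _) Computable.id

theorem exists_kap_eq_some {f : ℕ → ℕ} (hf : Computable f) :
    ∃ e, ∀ n, kap e n = Part.some (f n) :=
  exists_kap_eq (Partrec.nat_iff.mp hf)

lemma mem_nuN_iff {n m : ℕ} : m ∈ nuN n ↔ n ∈ toL m := by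
  simp [nuN, upClo, sle, mem_bang_univ]

/-- The tracker sends the code of a list of numbers to the concatenation of their realizers. -/
theorem tracked_of_computable_realizers {A : HAsmObj} {f : ℕ → A.carrier} {v : ℕ → ℕ}
    (hv : Computable v) (hvf : ∀ k, v k ∈ A.rz (f k)) : ∃ r, Tracks NObj A f r := by
  have hc : Computable fun m => ofL ((toL m).flatMap fun k => toL (v k)) :=
    Computable.encode.comp ((Computable.ofNat _).list_flatMap
      ((Computable.ofNat (List ℕ)).comp (hv.comp Computable.snd)).to₂)
  obtain ⟨e, he⟩ := exists_kap_eq_some hc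
  have hmem : ∀ m, ofL ((toL m).flatMap fun k => toL (v k)) ∈ bang A.real := by
    intro m x hx
    obtain ⟨k, -, hxk⟩ := List.mem_flatMap.mp (by simpa using hx)
    exact A.rz_sub (f k) (hvf k) x hxk
  refine ⟨e, fun m _ => ⟨_, by rw [he]; exact Part.mem_some _, hmem m⟩, fun n m hm => ?_⟩
  refine ⟨_, by rw [he]; exact Part.mem_some _, A.rz_up (f n) (v n) (hvf n) _ (hmem m) ?_⟩
  intro x hx
  simpa using ⟨n, mem_nuN_iff.mp hm, hx⟩

def iterKap (ra rg k : ℕ) : Part ℕ :=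
  k.rec (kap ra (ofL [])) fun _ p => p.bind (kap rg)

lemma iterKap_partrec (ra rg : ℕ) : Partrec (iterKap ra rg) :=
  Partrec.nat_rec Computable.id ((kap_partrec ra).comp (Computable.const _))
    ((kap_partrec rg).comp (Computable.snd.comp Computable.snd)).to₂

lemma exists_mem_iterKap {A : HAsmObj} {x : A.carrier} {g : A.carrier → A.carrier} {ra rg : ℕ}
    (hx : kapIn ra (ofL []) (A.rz x)) (hg : Tracks A A g rg) (k : ℕ) :
    ∃ w ∈ iterKap ra rg k, w ∈ A.rz (g^[k] x) := by
  induction k with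
  | zero => exact hx
  | succ k ih =>
    obtain ⟨w, hw, hwx⟩ := ih
    obtain ⟨u, hu, hux⟩ := hg.2 _ w hwx
    rw [Function.iterate_succ_apply']
    exact ⟨u, Part.mem_bind_iff.mpr ⟨w, hw, hu⟩, hux⟩

theorem tracked_iterate {A : HAsmObj} (a : oneObj ⟶ A) (g : A ⟶ A) :
    ∃ r, Tracks NObj A (fun n => g.toFun^[n] (a.toFun PUnit.unit)) r := by
  obtain ⟨ra, -, hra⟩ := a.tracked
  obtain ⟨rg, hrg⟩ := g.tracked
  choose v hv hvA using exists_mem_iterKap (hra PUnit.unit _ (mem_bang_univ _)) hrg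
  exact tracked_of_computable_realizers ((iterKap_partrec ra rg).of_eq_tot hv) hvA

def natRec {A : HAsmObj} (a : oneObj ⟶ A) (g : A ⟶ A) : NObj ⟶ A :=
  ⟨fun n => g.toFun^[n] (a.toFun PUnit.unit), tracked_iterate a g⟩

/-- `(N, 0, s)` is a natural numbers object in the category of Herbrand
assemblies. -/
theorem nno_in_hasm (A : HAsmObj) (a : oneObj ⟶ A) (g : A ⟶ A) :
    ∃! h : NObj ⟶ A, zeroH ≫ h = a ∧ succH ≫ h = h ≫ g := by
  refine ⟨natRec a g,
    ⟨HHom.ext' rfl, HHom.ext' (funext fun n => Function.iterate_succ_apply' _ n _)⟩, ?_⟩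
  rintro h ⟨h_zero, h_succ⟩
  refine HHom.ext' (funext fun (n : ℕ) => ?_)
  induction n with
  | zero => exact congrFun (congrArg HHom.toFun h_zero) PUnit.unit
  | succ n ih =>
    have h_step : h.toFun (n + 1) = g.toFun (h.toFun n) :=
      congrFun (congrArg HHom.toFun h_succ) n
    rw [h_step, ih]
    exact (Function.iterate_succ_apply' _ n _).symm

end Herbrand
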